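/- arXiv:1308.2883 — 5 statements merged into one kernel-verified Lean document; each statement's English description precedes it below -/
import Mathlib

section
/- Let k > 0, a > 0, C > 0, and 0 < ℓ < 1 with C·ℓ > 1 and C·ℓ³ > 1. Then for every R > 0, the quantity f(R) = (aℓ/k)(1 − Cℓ³) + kR(1 − Cℓ³)·tanh(aR) + (ℓ − Cℓ³)·aR + (1 − Cℓ⁴)·tanh(aR) is strictly negative. -/
/-! With `x = a R` and `u = C ℓ³ > 1`, the first two terms are `≤ 0` (the first `< 0`).
The remaining two are `p x + q tanh x` with `p = ℓ - u < 0` and `p + q = (1 + ℓ)(1 - u) < 0`;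
since `0 < tanh x < x`, this equals `p (x - tanh x) + (p + q) tanh x < 0`, whatever the sign
of `q = 1 - C ℓ⁴`. -/

namespace Real

theorem sinh_lt_mul_cosh {x : ℝ} (hx : 0 < x) : sinh x < x * cosh x := by
  have hmono : StrictMonoOn (fun t : ℝ => t * cosh t - sinh t) (Set.Ici 0) := by
    refine strictMonoOn_of_deriv_pos (convex_Ici 0) (by fun_prop) fun t ht => ?_
    rw [interior_Ici, Set.mem_Ioi] at ht
    have hderiv : HasDerivAt (fun t : ℝ => t * cosh t - sinh t) (t * sinh t) t :=
      (((hasDerivAt_id' t).mul (hasDerivAt_cosh t)).sub (hasDerivAt_sinh t)).congr_deriv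
        (by ring)
    rw [hderiv.deriv]
    exact mul_pos ht (sinh_pos_iff.mpr ht)
  simpa using hmono Set.self_mem_Ici (Set.mem_Ici.mpr hx.le) hx

theorem tanh_pos {x : ℝ} (hx : 0 < x) : 0 < tanh x := by
  rw [tanh_eq_sinh_div_cosh]
  exact div_pos (sinh_pos_iff.mpr hx) (cosh_pos x)

theorem tanh_lt_self {x : ℝ} (hx : 0 < x) : tanh x < x := by
  rw [tanh_eq_sinh_div_cosh, div_lt_iff₀ (cosh_pos x)]
  exact sinh_lt_mul_cosh hx

end Real

theorem mul_add_mul_neg_of_lt {p q t x : ℝ} (ht : 0 < t) (htx : t < x) (hp : p < 0)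
    (hpq : p + q < 0) : p * x + q * t < 0 := by
  have : p * x + q * t = p * (x - t) + (p + q) * t := by ring
  rw [this]
  linarith [mul_neg_of_neg_of_pos hp (sub_pos.mpr htx), mul_neg_of_neg_of_pos hpq ht]

theorem quasiMorse_3d_fminus_neg_general (k a C ℓ : ℝ) (hk : 0 < k) (ha : 0 < a)
    (hℓ0 : 0 < ℓ) (hℓ1 : ℓ < 1)
    (hCℓ3 : 1 < C * ℓ ^ 3) :
    ∀ R : ℝ, 0 < R →
      (a * ℓ / k) * (1 - C * ℓ ^ 3) + k * R * (1 - C * ℓ ^ 3) * Real.tanh (a * R)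
        + (ℓ - C * ℓ ^ 3) * (a * R) + (1 - C * ℓ ^ 4) * Real.tanh (a * R) < 0 := by
  intro R hR
  have hx : 0 < a * R := mul_pos ha hR
  have ht : 0 < Real.tanh (a * R) := Real.tanh_pos hx
  have hu : 1 - C * ℓ ^ 3 < 0 := by linarith
  have hfirst : (a * ℓ / k) * (1 - C * ℓ ^ 3) < 0 := mul_neg_of_pos_of_neg (by positivity) hu
  have hsecond : k * R * (1 - C * ℓ ^ 3) * Real.tanh (a * R) ≤ 0 :=
    mul_nonpos_of_nonpos_of_nonneg
      (mul_nonpos_of_nonneg_of_nonpos (by positivity) hu.le) ht.le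
  have hrest : (ℓ - C * ℓ ^ 3) * (a * R) + (1 - C * ℓ ^ 4) * Real.tanh (a * R) < 0 := by
    refine mul_add_mul_neg_of_lt ht (Real.tanh_lt_self hx) (by linarith) ?_
    have : ℓ - C * ℓ ^ 3 + (1 - C * ℓ ^ 4) = (1 + ℓ) * (1 - C * ℓ ^ 3) := by ring
    rw [this]
    exact mul_neg_of_pos_of_neg (by linarith) hu
  linarith

/-- Non-existence sign computation in 3D for `A < 0`: the function `f_-(R)` is
strictly negative for every `R > 0`. -/
theorem quasiMorse_3d_fminus_neg (k a C ℓ : ℝ) (hk : 0 < k) (ha : 0 < a)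
    (hC : 0 < C) (hℓ0 : 0 < ℓ) (hℓ1 : ℓ < 1) (hCℓ : 1 < C * ℓ)
    (hCℓ3 : 1 < C * ℓ ^ 3) :
    ∀ R : ℝ, 0 < R →
      (a * ℓ / k) * (1 - C * ℓ ^ 3) + k * R * (1 - C * ℓ ^ 3) * Real.tanh (a * R)
        + (ℓ - C * ℓ ^ 3) * (a * R) + (1 - C * ℓ ^ 4) * Real.tanh (a * R) < 0 :=
  quasiMorse_3d_fminus_neg_general k a C ℓ hk ha hℓ0 hℓ1 hCℓ3
end

section
/- Let a, k > 0 and 0 < ℓ < 1, and define g(R) = (a/k)·((a²ℓ − k²)·kR + a²ℓ(ℓ+1)) / (a²(ℓ+1)·kR + k² + a²(ℓ²+ℓ+1)) for R ≥ 0. Then g'(R) > −a for all R ≥ 0. -/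
/-!
Writing `g = (α R + β) / (γ R + δ)`, its derivative is `(α δ - β γ) / (γ R + δ)²`, and here the
determinant `α δ - β γ` factors as `-a (k² + a²) (k² + a² ℓ²)`. So `g'(R) > -a` amounts to
`(k² + a²) (k² + a² ℓ²) < (γ R + δ)²`; the denominator is smallest at `R = 0`, and there the
inequality follows from AM-GM, since `δ = k² + a² (ℓ² + ℓ + 1)` exceeds the arithmetic mean of
`k² + a²` and `k² + a² ℓ²` by `a² (ℓ + 1)² / 2`.
-/

theorem hasDerivAt_affine_div_affine (α β γ δ x : ℝ) (hx : γ * x + δ ≠ 0) :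
    HasDerivAt (fun x => (α * x + β) / (γ * x + δ)) ((α * δ - β * γ) / (γ * x + δ) ^ 2) x := by
  have hnum : HasDerivAt (fun x => α * x + β) α x := by
    simpa using ((hasDerivAt_id x).const_mul α).add_const β
  have hden : HasDerivAt (fun x => γ * x + δ) γ x := by
    simpa using ((hasDerivAt_id x).const_mul γ).add_const δ
  refine (hnum.div hden hx).congr_deriv ?_
  ring

theorem mul_lt_sq_of_ne_zero_of_ne_neg_one (a k ℓ : ℝ) (ha : a ≠ 0) (hℓ : ℓ ≠ -1) :
    (k ^ 2 + a ^ 2) * (k ^ 2 + a ^ 2 * ℓ ^ 2) < (k ^ 2 + a ^ 2 * (ℓ ^ 2 + ℓ + 1)) ^ 2 := by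
  have hgap : 0 < a ^ 2 * (ℓ + 1) ^ 2 := by
    have : ℓ + 1 ≠ 0 := fun h => hℓ (by linarith)
    positivity
  calc (k ^ 2 + a ^ 2) * (k ^ 2 + a ^ 2 * ℓ ^ 2) ≤ (k ^ 2 + a ^ 2 * (1 + ℓ ^ 2) / 2) ^ 2 := by
        nlinarith [sq_nonneg (a ^ 2 - a ^ 2 * ℓ ^ 2)]
    _ < (k ^ 2 + a ^ 2 * (ℓ ^ 2 + ℓ + 1)) ^ 2 :=
        pow_lt_pow_left₀ (by linarith) (by positivity) two_ne_zero

theorem hasDerivAt_quasiMorse_g (a k ℓ R : ℝ) (hk : k ≠ 0)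
    (hD : a ^ 2 * (ℓ + 1) * (k * R) + k ^ 2 + a ^ 2 * (ℓ ^ 2 + ℓ + 1) ≠ 0) :
    HasDerivAt (fun R : ℝ =>
        (a / k) * ((a ^ 2 * ℓ - k ^ 2) * (k * R) + a ^ 2 * ℓ * (ℓ + 1)) /
          (a ^ 2 * (ℓ + 1) * (k * R) + k ^ 2 + a ^ 2 * (ℓ ^ 2 + ℓ + 1)))
      (-(a * ((k ^ 2 + a ^ 2) * (k ^ 2 + a ^ 2 * ℓ ^ 2))) /
        (a ^ 2 * (ℓ + 1) * (k * R) + k ^ 2 + a ^ 2 * (ℓ ^ 2 + ℓ + 1)) ^ 2) R := by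
  have h := hasDerivAt_affine_div_affine (a * (a ^ 2 * ℓ - k ^ 2))
    (a / k * (a ^ 2 * ℓ * (ℓ + 1))) (a ^ 2 * (ℓ + 1) * k) (k ^ 2 + a ^ 2 * (ℓ ^ 2 + ℓ + 1)) R
    fun h => hD (by linear_combination h)
  convert h using 1
  · funext x
    field_simp
    ring
  · field_simp
    ring

theorem quasiMorse_3d_g_deriv_gt_general (a k ℓ : ℝ) (ha : 0 < a) (hk : 0 < k)
    (hℓ0 : 0 < ℓ) :
    ∀ R : ℝ, 0 ≤ R →
      -a < deriv (fun R : ℝ =>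
        (a / k) * ((a ^ 2 * ℓ - k ^ 2) * (k * R) + a ^ 2 * ℓ * (ℓ + 1)) /
          (a ^ 2 * (ℓ + 1) * (k * R) + k ^ 2 + a ^ 2 * (ℓ ^ 2 + ℓ + 1))) R := by
  intro R hR
  set D := a ^ 2 * (ℓ + 1) * (k * R) + k ^ 2 + a ^ 2 * (ℓ ^ 2 + ℓ + 1)
  have hD0 : k ^ 2 + a ^ 2 * (ℓ ^ 2 + ℓ + 1) ≤ D := by
    have : 0 ≤ a ^ 2 * (ℓ + 1) * (k * R) := by positivity
    linarith
  have hD : 0 < D := by positivity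
  have hP : (k ^ 2 + a ^ 2) * (k ^ 2 + a ^ 2 * ℓ ^ 2) < D ^ 2 :=
    (mul_lt_sq_of_ne_zero_of_ne_neg_one a k ℓ ha.ne' (by linarith)).trans_le
      (pow_le_pow_left₀ (by positivity) hD0 2)
  rw [(hasDerivAt_quasiMorse_g a k ℓ R hk.ne' hD.ne').deriv, neg_div, neg_lt_neg_iff,
    div_lt_iff₀ (by positivity)]
  exact mul_lt_mul_of_pos_left hP ha

/-- The auxiliary rational function `g` in the 3D existence proof satisfies
`g'(R) > -a` for all `R ≥ 0`. -/
theorem quasiMorse_3d_g_deriv_gt (a k ℓ : ℝ) (ha : 0 < a) (hk : 0 < k)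
    (hℓ0 : 0 < ℓ) (hℓ1 : ℓ < 1) :
    ∀ R : ℝ, 0 ≤ R →
      -a < deriv (fun R : ℝ =>
        (a / k) * ((a ^ 2 * ℓ - k ^ 2) * (k * R) + a ^ 2 * ℓ * (ℓ + 1)) /
          (a ^ 2 * (ℓ + 1) * (k * R) + k ^ 2 + a ^ 2 * (ℓ ^ 2 + ℓ + 1))) R :=
  quasiMorse_3d_g_deriv_gt_general a k ℓ ha hk hℓ0
end

section
/- Let a, k > 0 and 0 < ℓ < 1, and let g(R) = (a/k)·((a²ℓ − k²)·kR + a²ℓ(ℓ+1)) / (a²(ℓ+1)·kR + k² + a²(ℓ²+ℓ+1)). Then on each open interval ((j−1/2)π/a, (j+1/2)π/a) for j ≥ 1, the function h(R) = tan(aR) + g(R) is strictly increasing and has exactly one zero. -/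
/-!
On `((j - 1/2)π/a, (j + 1/2)π/a)` the derivative of `tan (a R)` is `a / cos² (a R) ≥ a`, while
`g` is a Möbius function of `R` with derivative `-a (k² + a²ℓ²)(k² + a²) / D(R)²`, where the
denominator satisfies `D(R) ≥ k² + a²(ℓ² + ℓ + 1) > max (k² + a²ℓ²) (k² + a²)` for `R > 0`;
hence `g' > -a` and `tan (a R) + g R` is strictly increasing. Since `g` is continuous at both
poles, the sum runs from `-∞` to `+∞`, and the intermediate value theorem gives the zero.
-/

open Real Filter Set Topology

theorem StrictMonoOn.existsUnique_eq_of_tendsto {α δ : Type*} [ConditionallyCompleteLinearOrder α]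
    [TopologicalSpace α] [OrderTopology α] [DenselyOrdered α]
    [LinearOrder δ] [TopologicalSpace δ] [OrderClosedTopology δ]
    {f : α → δ} {L U : α} (hLU : L < U) (hmono : StrictMonoOn f (Ioo L U))
    (hcont : ContinuousOn f (Ioo L U)) (hL : Tendsto f (𝓝[>] L) atBot)
    (hU : Tendsto f (𝓝[<] U) atTop) (y : δ) :
    ∃! x, x ∈ Ioo L U ∧ f x = y := by
  have := nhdsGT_neBot_of_exists_gt ⟨U, hLU⟩
  have := nhdsLT_neBot_of_exists_lt ⟨L, hLU⟩
  obtain ⟨x₁, hfx₁, hx₁⟩ :=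
    ((hL.eventually (eventually_le_atBot y)).and (Ioo_mem_nhdsGT hLU)).exists
  obtain ⟨x₂, hfx₂, hx₂⟩ :=
    ((hU.eventually (eventually_ge_atTop y)).and (Ioo_mem_nhdsLT hLU)).exists
  obtain ⟨x, hx, rfl⟩ := hcont.surjOn_Icc hx₁ hx₂ ⟨hfx₁, hfx₂⟩
  exact ⟨x, ⟨hx, rfl⟩, fun x' ⟨hx', hfx'⟩ => hmono.injOn hx' hx hfx'⟩

theorem mul_sub_int_mul_pi_mem_Ioo {a R : ℝ} (ha : 0 < a) {n : ℤ}
    (hR : R ∈ Ioo ((n - 1 / 2) * π / a) ((n + 1 / 2) * π / a)) :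
    a * R - n * π ∈ Ioo (-(π / 2)) (π / 2) := by
  rw [mem_Ioo, div_lt_iff₀ ha, lt_div_iff₀ ha] at hR
  constructor <;> linarith

theorem cos_mul_ne_zero_of_mem_Ioo {a R : ℝ} (ha : 0 < a) {n : ℤ}
    (hR : R ∈ Ioo ((n - 1 / 2) * π / a) ((n + 1 / 2) * π / a)) : cos (a * R) ≠ 0 := by
  have := (cos_pos_of_mem_Ioo (mul_sub_int_mul_pi_mem_Ioo ha hR)).ne'
  rw [cos_sub_int_mul_pi] at this
  exact right_ne_zero_of_mul this

theorem hasDerivAt_tan_mul {a R : ℝ} (h : cos (a * R) ≠ 0) :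
    HasDerivAt (fun R => tan (a * R)) (a / cos (a * R) ^ 2) R := by
  have := (hasDerivAt_tan h).comp R ((hasDerivAt_id' R).const_mul a)
  rw [mul_one, one_div_mul_eq_div] at this
  exact this

theorem tendsto_tan_mul_nhdsGT {a : ℝ} (ha : 0 < a) (n : ℤ) :
    Tendsto (fun R => tan (a * R)) (𝓝[>] ((n - 1 / 2) * π / a)) atBot := by
  have hmaps : MapsTo (fun R => a * R - n * π) (Ioi ((n - 1 / 2) * π / a)) (Ioi (-(π / 2))) :=
    fun R hR => by rw [mem_Ioi, div_lt_iff₀ ha] at hR; rw [mem_Ioi]; linarith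
  have hφ : Tendsto (fun R => a * R - n * π) (𝓝[>] ((n - 1 / 2) * π / a)) (𝓝[>] (-(π / 2))) := by
    convert (Continuous.continuousWithinAt (by fun_prop)).tendsto_nhdsWithin hmaps using 2
    field_simp; ring
  simpa [Function.comp_def, tan_periodic.sub_int_mul_eq] using tendsto_tan_neg_pi_div_two.comp hφ

theorem tendsto_tan_mul_nhdsLT {a : ℝ} (ha : 0 < a) (n : ℤ) :
    Tendsto (fun R => tan (a * R)) (𝓝[<] ((n + 1 / 2) * π / a)) atTop := by
  have hmaps : MapsTo (fun R => a * R - n * π) (Iio ((n + 1 / 2) * π / a)) (Iio (π / 2)) :=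
    fun R hR => by rw [mem_Iio, lt_div_iff₀ ha] at hR; rw [mem_Iio]; linarith
  have hφ : Tendsto (fun R => a * R - n * π) (𝓝[<] ((n + 1 / 2) * π / a)) (𝓝[<] (π / 2)) := by
    convert (Continuous.continuousWithinAt (by fun_prop)).tendsto_nhdsWithin hmaps using 2
    field_simp; ring
  simpa [Function.comp_def, tan_periodic.sub_int_mul_eq] using tendsto_tan_pi_div_two.comp hφ

section TanPlusPerturbation

variable {a : ℝ} {g : ℝ → ℝ}

theorem strictMonoOn_tan_mul_add (ha : 0 < a) (n : ℤ)
    (hg : ∀ R ∈ Ioo ((n - 1 / 2) * π / a) ((n + 1 / 2) * π / a), DifferentiableAt ℝ g R)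
    (hg' : ∀ R ∈ Ioo ((n - 1 / 2) * π / a) ((n + 1 / 2) * π / a), -a < deriv g R) :
    StrictMonoOn (fun R => tan (a * R) + g R)
      (Ioo ((n - 1 / 2) * π / a) ((n + 1 / 2) * π / a)) := by
  have hderiv R (hR : R ∈ Ioo ((n - 1 / 2) * π / a) ((n + 1 / 2) * π / a)) :=
    (hasDerivAt_tan_mul (cos_mul_ne_zero_of_mem_Ioo ha hR)).add (hg R hR).hasDerivAt
  refine strictMonoOn_of_hasDerivWithinAt_pos (f' := fun R => a / cos (a * R) ^ 2 + deriv g R)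
    (convex_Ioo _ _)
    (fun R hR => (hderiv R hR).continuousAt.continuousWithinAt) (fun R hR => ?_) fun R hR => ?_
  · rw [interior_Ioo] at hR ⊢
    exact (hderiv R hR).hasDerivWithinAt
  · rw [interior_Ioo] at hR
    have hcos := cos_mul_ne_zero_of_mem_Ioo ha hR
    have : a ≤ a / cos (a * R) ^ 2 := le_div_self ha.le (by positivity) (cos_sq_le_one _)
    linarith [hg' R hR]

theorem existsUnique_tan_mul_add_eq_zero (ha : 0 < a) (n : ℤ)
    (hg : ∀ R ∈ Icc ((n - 1 / 2) * π / a) ((n + 1 / 2) * π / a), DifferentiableAt ℝ g R)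
    (hg' : ∀ R ∈ Ioo ((n - 1 / 2) * π / a) ((n + 1 / 2) * π / a), -a < deriv g R) :
    ∃! R, R ∈ Ioo ((n - 1 / 2) * π / a) ((n + 1 / 2) * π / a) ∧ tan (a * R) + g R = 0 := by
  have hLU : (n - 1 / 2) * π / a < (n + 1 / 2) * π / a := by
    gcongr
    linarith
  have hcont : ContinuousOn (fun R => tan (a * R) + g R)
      (Ioo ((n - 1 / 2) * π / a) ((n + 1 / 2) * π / a)) := fun R hR =>
    ((hasDerivAt_tan_mul (cos_mul_ne_zero_of_mem_Ioo ha hR)).continuousAt.add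
      (hg R (Ioo_subset_Icc_self hR)).continuousAt).continuousWithinAt
  have hgL : Tendsto g (𝓝[>] ((n - 1 / 2) * π / a)) (𝓝 (g ((n - 1 / 2) * π / a))) :=
    (hg _ (left_mem_Icc.2 hLU.le)).continuousAt.continuousWithinAt
  have hgU : Tendsto g (𝓝[<] ((n + 1 / 2) * π / a)) (𝓝 (g ((n + 1 / 2) * π / a))) :=
    (hg _ (right_mem_Icc.2 hLU.le)).continuousAt.continuousWithinAt
  exact (strictMonoOn_tan_mul_add ha n (fun R hR => hg R (Ioo_subset_Icc_self hR)) hg')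
    |>.existsUnique_eq_of_tendsto hLU hcont ((tendsto_tan_mul_nhdsGT ha n).atBot_add hgL)
      ((tendsto_tan_mul_nhdsLT ha n).atTop_add hgU) 0

end TanPlusPerturbation

theorem hasDerivAt_linear_div_linear {𝕜 : Type*} [NontriviallyNormedField 𝕜] (p q r s : 𝕜)
    {x : 𝕜} (hx : r * x + s ≠ 0) :
    HasDerivAt (fun x => (p * x + q) / (r * x + s)) ((p * s - q * r) / (r * x + s) ^ 2) x := by
  have hnum : HasDerivAt (fun x => p * x + q) p x := by
    simpa using ((hasDerivAt_id' x).const_mul p).add_const q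
  have hden : HasDerivAt (fun x => r * x + s) r x := by
    simpa using ((hasDerivAt_id' x).const_mul r).add_const s
  exact (hnum.div hden hx).congr_deriv (by ring)

section QuasiMorse

variable {a k ℓ : ℝ} {g : ℝ → ℝ}

theorem hasDerivAt_quasiMorse (hk : k ≠ 0)
    (hg : ∀ R : ℝ, g R =
      (a / k) * ((a ^ 2 * ℓ - k ^ 2) * (k * R) + a ^ 2 * ℓ * (ℓ + 1)) /
        (a ^ 2 * (ℓ + 1) * (k * R) + k ^ 2 + a ^ 2 * (ℓ ^ 2 + ℓ + 1)))
    {R : ℝ} (hR : a ^ 2 * (ℓ + 1) * (k * R) + k ^ 2 + a ^ 2 * (ℓ ^ 2 + ℓ + 1) ≠ 0) :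
    HasDerivAt g (-(a * ((k ^ 2 + a ^ 2 * ℓ ^ 2) * (k ^ 2 + a ^ 2))) /
      (a ^ 2 * (ℓ + 1) * (k * R) + k ^ 2 + a ^ 2 * (ℓ ^ 2 + ℓ + 1)) ^ 2) R := by
  have hg_eq : g = fun R => (a * (a ^ 2 * ℓ - k ^ 2) * R + a / k * (a ^ 2 * ℓ * (ℓ + 1))) /
      (a ^ 2 * (ℓ + 1) * k * R + (k ^ 2 + a ^ 2 * (ℓ ^ 2 + ℓ + 1))) := by
    ext R
    rw [hg]
    field_simp
    ring
  rw [hg_eq]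
  refine (hasDerivAt_linear_div_linear _ _ _ _ (by convert hR using 1; ring)).congr_deriv ?_
  field_simp
  ring

theorem neg_lt_quasiMorse_deriv (ha : 0 < a) (hk : 0 < k) (hℓ : 0 < ℓ) {R : ℝ} (hR : 0 < R) :
    -a < -(a * ((k ^ 2 + a ^ 2 * ℓ ^ 2) * (k ^ 2 + a ^ 2))) /
      (a ^ 2 * (ℓ + 1) * (k * R) + k ^ 2 + a ^ 2 * (ℓ ^ 2 + ℓ + 1)) ^ 2 := by
  have ha2 : 0 < a ^ 2 := by positivity
  have hP : (k ^ 2 + a ^ 2 * ℓ ^ 2) * (k ^ 2 + a ^ 2) < (k ^ 2 + a ^ 2 * (ℓ ^ 2 + ℓ + 1)) ^ 2 := by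
    rw [sq (k ^ 2 + _)]
    apply mul_lt_mul'' <;> nlinarith
  rw [add_assoc, neg_div, neg_lt_neg_iff, div_lt_iff₀ (by positivity)]
  gcongr
  refine hP.trans_le (pow_le_pow_left₀ (by positivity) ?_ 2)
  exact le_add_of_nonneg_left (by positivity)

end QuasiMorse

theorem quasiMorse_3d_unique_root_general (a k ℓ : ℝ) (ha : 0 < a) (hk : 0 < k)
    (hℓ0 : 0 < ℓ) (g : ℝ → ℝ)
    (hg : ∀ R : ℝ, g R =
      (a / k) * ((a ^ 2 * ℓ - k ^ 2) * (k * R) + a ^ 2 * ℓ * (ℓ + 1)) /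
        (a ^ 2 * (ℓ + 1) * (k * R) + k ^ 2 + a ^ 2 * (ℓ ^ 2 + ℓ + 1))) :
    ∀ j : ℕ, 1 ≤ j →
      StrictMonoOn (fun R => Real.tan (a * R) + g R)
        (Set.Ioo (((j : ℝ) - 1 / 2) * π / a) (((j : ℝ) + 1 / 2) * π / a)) ∧
      ∃! R : ℝ, R ∈ Set.Ioo (((j : ℝ) - 1 / 2) * π / a) (((j : ℝ) + 1 / 2) * π / a) ∧
        Real.tan (a * R) + g R = 0 := by
  intro j hj
  have hL : 0 < (((j : ℤ) : ℝ) - 1 / 2) * π / a := by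
    have : (1 : ℝ) ≤ ((j : ℤ) : ℝ) := by exact_mod_cast hj
    exact div_pos (mul_pos (by linarith) pi_pos) ha
  have hderiv R (hR : 0 < R) := hasDerivAt_quasiMorse hk.ne' hg (R := R) (by positivity)
  have hdiff : ∀ R ∈ Icc (((j : ℤ) - 1 / 2) * π / a) (((j : ℤ) + 1 / 2) * π / a),
      DifferentiableAt ℝ g R := fun R hR => (hderiv R (hL.trans_le hR.1)).differentiableAt
  have hderiv_gt : ∀ R ∈ Ioo (((j : ℤ) - 1 / 2) * π / a) (((j : ℤ) + 1 / 2) * π / a),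
      -a < deriv g R := fun R hR => by
    rw [(hderiv R (hL.trans hR.1)).deriv]
    exact neg_lt_quasiMorse_deriv ha hk hℓ0 (hL.trans hR.1)
  have hmono := strictMonoOn_tan_mul_add ha j (fun R hR => hdiff R (Ioo_subset_Icc_self hR))
    hderiv_gt
  have hroot := existsUnique_tan_mul_add_eq_zero ha j hdiff hderiv_gt
  push_cast at hmono hroot
  exact ⟨hmono, hroot⟩

/-- On each interval between consecutive poles of `tan (a R)`, the function
`tan (a R) + g R` is strictly increasing and has exactly one zero. -/
theorem quasiMorse_3d_unique_root (a k ℓ : ℝ) (ha : 0 < a) (hk : 0 < k)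
    (hℓ0 : 0 < ℓ) (hℓ1 : ℓ < 1) (g : ℝ → ℝ)
    (hg : ∀ R : ℝ, g R =
      (a / k) * ((a ^ 2 * ℓ - k ^ 2) * (k * R) + a ^ 2 * ℓ * (ℓ + 1)) /
        (a ^ 2 * (ℓ + 1) * (k * R) + k ^ 2 + a ^ 2 * (ℓ ^ 2 + ℓ + 1))) :
    ∀ j : ℕ, 1 ≤ j →
      StrictMonoOn (fun R => Real.tan (a * R) + g R)
        (Set.Ioo (((j : ℝ) - 1 / 2) * π / a) (((j : ℝ) + 1 / 2) * π / a)) ∧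
      ∃! R : ℝ, R ∈ Set.Ioo (((j : ℝ) - 1 / 2) * π / a) (((j : ℝ) + 1 / 2) * π / a) ∧
        Real.tan (a * R) + g R = 0 :=
  quasiMorse_3d_unique_root_general a k ℓ ha hk hℓ0 g hg
end

section
/- The function r ↦ sin(a r)/r (with a > 0), extended by the value a at r = 0, is strictly decreasing on [0, r̄₁], where r̄₁ is the smallest positive solution of tan(a r) = a r in the interval (π/(2a), 3π/(2a)). -/
/-!
With `x = a r` the function is `a · sinc x`, and `sinc' x = (x cos x - sin x) / x²`. The numerator
`h x = sin x - x cos x` has `h' x = x sin x > 0` on `(0, π)`, so `h > 0` on `(0, π]`; on `(π, 3π/2)`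
we have `cos x < 0`, so `h x = 0` exactly when `tan x = x`. Hence `h` cannot vanish before the
first fixed point `a r̄₁` of `tan`, and `sinc` is strictly decreasing on `[0, a r̄₁]`.
-/

open Real Set

namespace Real

theorem sin_sub_mul_cos_pos {x : ℝ} (hx₀ : 0 < x) (hxπ : x ≤ π) : 0 < sin x - x * cos x := by
  have hmono : StrictMonoOn (fun x => sin x - x * cos x) (Icc 0 π) := by
    refine strictMonoOn_of_deriv_pos (convex_Icc 0 π) (by fun_prop) fun y hy => ?_
    rw [interior_Icc] at hy
    have hderiv : HasDerivAt (fun x => sin x - x * cos x) (y * sin y) y :=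
      ((hasDerivAt_sin y).sub ((hasDerivAt_id' y).mul (hasDerivAt_cos y))).congr_deriv (by ring)
    rw [hderiv.deriv]
    exact mul_pos hy.1 (sin_pos_of_pos_of_lt_pi hy.1 hy.2)
  simpa using hmono (left_mem_Icc.mpr pi_pos.le) ⟨hx₀.le, hxπ⟩ hx₀

theorem sin_sub_mul_cos_pos_of_forall_tan_eq_self_le {X x : ℝ} (hX : X ≤ 3 * π / 2)
    (hfirst : ∀ s ∈ Ioo (π / 2) (3 * π / 2), tan s = s → X ≤ s) (hx : x ∈ Ioo 0 X) :
    0 < sin x - x * cos x := by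
  by_contra! hneg
  have hπx : π < x := by
    by_contra! hxπ
    exact hneg.not_gt (sin_sub_mul_cos_pos hx.1 hxπ)
  obtain ⟨s, hs, hs₀⟩ : ∃ s ∈ Icc π x, sin s - s * cos s = 0 :=
    intermediate_value_Icc' hπx.le (by fun_prop) ⟨hneg, by simp [pi_pos.le]⟩
  have hπs : π < s := hs.1.lt_of_ne fun h => by simp [← h, pi_ne_zero] at hs₀
  have hs_mem : s ∈ Ioo (π / 2) (3 * π / 2) := ⟨by linarith [pi_pos], by linarith [hs.2, hx.2]⟩
  have hcos : cos s < 0 := cos_neg_of_pi_div_two_lt_of_lt hs_mem.1 (by linarith [hs_mem.2])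
  have htan : tan s = s := by
    rw [tan_eq_sin_div_cos, div_eq_iff hcos.ne]
    linarith
  linarith [hfirst s hs_mem htan, hs.2, hx.2]

theorem hasDerivAt_sinc {x : ℝ} (hx : x ≠ 0) :
    HasDerivAt sinc ((x * cos x - sin x) / x ^ 2) x := by
  have hquot : HasDerivAt (fun y => sin y / y) ((cos x * x - sin x * 1) / x ^ 2) x :=
    (hasDerivAt_sin x).div (hasDerivAt_id x) hx
  refine (by simpa [mul_comm] using hquot : HasDerivAt _ _ x).congr_of_eventuallyEq ?_
  filter_upwards [isOpen_ne.mem_nhds hx] with y hy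
  exact sinc_of_ne_zero hy

theorem ite_sin_mul_div_eq_mul_sinc {a : ℝ} (ha : a ≠ 0) (r : ℝ) :
    (if r = 0 then a else sin (a * r) / r) = a * sinc (a * r) := by
  rcases eq_or_ne r 0 with rfl | hr
  · simp
  · rw [if_neg hr, sinc_of_ne_zero (mul_ne_zero ha hr)]
    field_simp

theorem strictAntiOn_sinc {X : ℝ} (hpos : ∀ x ∈ Ioo 0 X, 0 < sin x - x * cos x) :
    StrictAntiOn sinc (Icc 0 X) := by
  refine strictAntiOn_of_deriv_neg (convex_Icc 0 X) continuous_sinc.continuousOn fun x hx => ?_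
  rw [interior_Icc] at hx
  rw [(hasDerivAt_sinc hx.1.ne').deriv]
  exact div_neg_of_neg_of_pos (by linarith [hpos x hx]) (by positivity [hx.1.ne'])

end Real

theorem sin_div_self_strictAnti_general (a rbar : ℝ) (ha : 0 < a)
    (hmem : rbar ∈ Set.Ioo (π / (2 * a)) (3 * π / (2 * a)))
    (hmin : ∀ s ∈ Set.Ioo (π / (2 * a)) (3 * π / (2 * a)),
      Real.tan (a * s) = a * s → rbar ≤ s) :
    StrictAntiOn (fun r : ℝ => if r = 0 then a else Real.sin (a * r) / r)
      (Set.Icc 0 rbar) := by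
  have hscale : ∀ t : ℝ, t / (2 * a) = t / 2 / a := fun t => by rw [div_div]
  have hX : a * rbar ≤ 3 * π / 2 := by
    have := hmem.2.le
    rwa [hscale, le_div_iff₀ ha, mul_comm] at this
  have hfirst : ∀ s ∈ Ioo (π / 2) (3 * π / 2), tan s = s → a * rbar ≤ s := by
    intro s hs htan
    have hs_div : s / a ∈ Ioo (π / (2 * a)) (3 * π / (2 * a)) := by
      rw [hscale, hscale]
      exact ⟨div_lt_div_of_pos_right hs.1 ha, div_lt_div_of_pos_right hs.2 ha⟩
    have := hmin (s / a) hs_div (by rwa [mul_div_cancel₀ s ha.ne'])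
    rwa [le_div_iff₀ ha, mul_comm] at this
  have hsinc : StrictAntiOn sinc (Icc 0 (a * rbar)) :=
    strictAntiOn_sinc fun x hx => sin_sub_mul_cos_pos_of_forall_tan_eq_self_le hX hfirst hx
  intro x hx y hy hxy
  simp only [ite_sin_mul_div_eq_mul_sinc ha.ne']
  have hmaps : ∀ r ∈ Icc 0 rbar, a * r ∈ Icc 0 (a * rbar) := fun r hr =>
    ⟨mul_nonneg ha.le hr.1, mul_le_mul_of_nonneg_left hr.2 ha.le⟩
  exact mul_lt_mul_of_pos_left (hsinc (hmaps x hx) (hmaps y hy) (mul_lt_mul_of_pos_left hxy ha)) ha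

/-- The function `r ↦ sin (a r) / r`, extended by the value `a` at `r = 0`, is
strictly decreasing on `[0, r̄₁]`, where `r̄₁` is the smallest solution of
`tan (a r) = a r` in `(π/(2a), 3π/(2a))`. -/
theorem sin_div_self_strictAnti (a rbar : ℝ) (ha : 0 < a)
    (hmem : rbar ∈ Set.Ioo (π / (2 * a)) (3 * π / (2 * a)))
    (htan : Real.tan (a * rbar) = a * rbar)
    (hmin : ∀ s ∈ Set.Ioo (π / (2 * a)) (3 * π / (2 * a)),
      Real.tan (a * s) = a * s → rbar ≤ s) :
    StrictAntiOn (fun r : ℝ => if r = 0 then a else Real.sin (a * r) / r)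
      (Set.Icc 0 rbar) :=
  sin_div_self_strictAnti_general a rbar ha hmem hmin
end

section
/- Let a, k > 0 and 0 < ℓ < 1, and let D(R) be as in the 3D determinant: D(R) = c₁(R)·sin(aR) + c₂(R)·cos(aR) with c₁, c₂ defined via c₁(R) = k√(2/(aπ))·(1/((1+a²ℓ²/k²)(kR+ℓ)) − 1/((1+a²/k²)(kR+1))), c₂(R) = √(2a/π)·(ℓ/((1+a²ℓ²/k²)(kR+ℓ)) − 1/((1+a²/k²)(kR+1))). Then D(0) = √(2a/π)·(1/(1+a²ℓ²/k²) − 1/(1+a²/k²)) > 0, and D has no zero in the interval (0, π/(2a)). -/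
/-!
Clearing the positive denominators `(k² + a²ℓ²)(kR + ℓ)` and `(k² + a²)(kR + 1)` turns
`D(R)` into a positive multiple of `k A sin(aR) + a B cos(aR)`, where `A` and `B` are affine
in `R`, `A > 0` for `R ≥ 0`, and `k A R + B = a²(1 - ℓ²)(kR + ℓ)(kR + 1) > 0`.
Since `x cos x ≤ sin x` on `[0, π/2)`, the combination is at least
`cos(aR) · a (k A R + B) > 0`, so `D > 0` on `[0, π/(2a))`.
-/

open Real

theorem Real.mul_cos_le_sin {x : ℝ} (hx0 : 0 ≤ x) (hx : x < π / 2) : x * cos x ≤ sin x := by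
  have hcos : 0 < cos x := cos_pos_of_mem_Ioo ⟨by linarith [pi_pos], hx⟩
  have := le_tan hx0 hx
  rwa [tan_eq_sin_div_cos, le_div_iff₀ hcos] at this

theorem Real.mul_sin_add_mul_cos_pos {p q x : ℝ} (hp : 0 ≤ p) (hx0 : 0 ≤ x) (hx : x < π / 2)
    (hpq : 0 < p * x + q) : 0 < p * sin x + q * cos x := by
  have hcos : 0 < cos x := cos_pos_of_mem_Ioo ⟨by linarith [pi_pos], hx⟩
  calc 0 < (p * x + q) * cos x := mul_pos hpq hcos
    _ = p * (x * cos x) + q * cos x := by ring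
    _ ≤ p * sin x + q * cos x := by gcongr; exact mul_cos_le_sin hx0 hx

theorem div_mul_sub_one_div_mul {k α β n e₁ e₂ : ℝ} (hk : k ≠ 0) (hα : k ^ 2 + α ≠ 0)
    (hβ : k ^ 2 + β ≠ 0) (he₁ : e₁ ≠ 0) (he₂ : e₂ ≠ 0) :
    n / ((1 + α / k ^ 2) * e₁) - 1 / ((1 + β / k ^ 2) * e₂) =
      k ^ 2 * (n * (k ^ 2 + β) * e₂ - (k ^ 2 + α) * e₁) / ((k ^ 2 + α) * (k ^ 2 + β) * e₁ * e₂) := by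
  field_simp

namespace QuasiMorse3D

noncomputable def sinCoeff (a k ℓ R : ℝ) : ℝ :=
  k * √(2 / (a * π)) *
    (1 / ((1 + a ^ 2 * ℓ ^ 2 / k ^ 2) * (k * R + ℓ)) - 1 / ((1 + a ^ 2 / k ^ 2) * (k * R + 1)))

noncomputable def cosCoeff (a k ℓ R : ℝ) : ℝ :=
  √(2 * a / π) *
    (ℓ / ((1 + a ^ 2 * ℓ ^ 2 / k ^ 2) * (k * R + ℓ)) - 1 / ((1 + a ^ 2 / k ^ 2) * (k * R + 1)))

noncomputable def det (a k ℓ R : ℝ) : ℝ :=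
  sinCoeff a k ℓ R * sin (a * R) + cosCoeff a k ℓ R * cos (a * R)

def sinNum (a k ℓ R : ℝ) : ℝ :=
  (k ^ 2 + a ^ 2) * (k * R + 1) - (k ^ 2 + a ^ 2 * ℓ ^ 2) * (k * R + ℓ)

def cosNum (a k ℓ R : ℝ) : ℝ :=
  ℓ * (k ^ 2 + a ^ 2) * (k * R + 1) - (k ^ 2 + a ^ 2 * ℓ ^ 2) * (k * R + ℓ)

theorem sinNum_pos {a k ℓ R : ℝ} (hk : 0 < k) (hℓ0 : 0 ≤ ℓ) (hℓ1 : ℓ < 1) (hR : 0 ≤ R) :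
    0 < sinNum a k ℓ R := by
  have hℓ2 : 0 ≤ 1 - ℓ ^ 2 := by nlinarith
  have hℓ3 : 0 ≤ 1 - ℓ ^ 3 := by nlinarith
  have hℓ : 0 < 1 - ℓ := by linarith
  have : sinNum a k ℓ R = a ^ 2 * (1 - ℓ ^ 2) * (k * R) + k ^ 2 * (1 - ℓ) + a ^ 2 * (1 - ℓ ^ 3) := by
    unfold sinNum; ring
  rw [this]
  positivity

theorem mul_sinNum_add_cosNum (a k ℓ R : ℝ) :
    k * sinNum a k ℓ R * R + cosNum a k ℓ R = a ^ 2 * (1 - ℓ ^ 2) * (k * R + ℓ) * (k * R + 1) := by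
  unfold sinNum cosNum; ring

theorem det_zero {a k ℓ : ℝ} (hℓ : ℓ ≠ 0) :
    det a k ℓ 0 = √(2 * a / π) * (1 / (1 + a ^ 2 * ℓ ^ 2 / k ^ 2) - 1 / (1 + a ^ 2 / k ^ 2)) := by
  simp only [det, cosCoeff, mul_zero, zero_add, mul_one, sin_zero, cos_zero]
  rw [mul_comm _ ℓ, ← div_div, div_self hℓ]

theorem det_eq {a k ℓ R : ℝ} (ha : 0 < a) (hk : k ≠ 0) (he₁ : k * R + ℓ ≠ 0)
    (he₂ : k * R + 1 ≠ 0) :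
    det a k ℓ R = √(2 / (a * π)) * k ^ 2 /
        ((k ^ 2 + a ^ 2 * ℓ ^ 2) * (k ^ 2 + a ^ 2) * (k * R + ℓ) * (k * R + 1)) *
      (k * sinNum a k ℓ R * sin (a * R) + a * cosNum a k ℓ R * cos (a * R)) := by
  have hα : k ^ 2 + a ^ 2 * ℓ ^ 2 ≠ 0 := by positivity
  have hβ : k ^ 2 + a ^ 2 ≠ 0 := by positivity
  have hsqrt : √(2 * a / π) = a * √(2 / (a * π)) := by
    rw [show 2 * a / π = a ^ 2 * (2 / (a * π)) by field_simp, sqrt_mul (by positivity),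
      sqrt_sq ha.le]
  rw [det, sinCoeff, cosCoeff, hsqrt, div_mul_sub_one_div_mul hk hα hβ he₁ he₂,
    div_mul_sub_one_div_mul hk hα hβ he₁ he₂, sinNum, cosNum]
  ring

theorem det_pos {a k ℓ R : ℝ} (ha : 0 < a) (hk : 0 < k) (hℓ0 : 0 < ℓ) (hℓ1 : ℓ < 1)
    (hR0 : 0 ≤ R) (hR : a * R < π / 2) : 0 < det a k ℓ R := by
  have he₁ : 0 < k * R + ℓ := by positivity
  have he₂ : 0 < k * R + 1 := by positivity
  rw [det_eq ha hk.ne' he₁.ne' he₂.ne']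
  refine mul_pos (by positivity) (mul_sin_add_mul_cos_pos ?_ (by positivity) hR ?_)
  · exact (mul_pos hk (sinNum_pos hk hℓ0.le hℓ1 hR0)).le
  · have hℓ2 : 0 < 1 - ℓ ^ 2 := by nlinarith
    calc 0 < a * (a ^ 2 * (1 - ℓ ^ 2) * (k * R + ℓ) * (k * R + 1)) := by positivity
      _ = k * sinNum a k ℓ R * (a * R) + a * cosNum a k ℓ R := by
        rw [← mul_sinNum_add_cosNum]; ring

end QuasiMorse3D

open QuasiMorse3D in
/-- The 3D determinant `det M₊` is explicit and positive at `R = 0` and has no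
zero on `(0, π/(2a))`. -/
theorem quasiMorse_3d_detM_no_zero_first_interval (a k ℓ : ℝ) (ha : 0 < a)
    (hk : 0 < k) (hℓ0 : 0 < ℓ) (hℓ1 : ℓ < 1) (c₁ c₂ D : ℝ → ℝ)
    (hc₁ : ∀ R : ℝ, c₁ R = k * Real.sqrt (2 / (a * π)) *
      (1 / ((1 + a ^ 2 * ℓ ^ 2 / k ^ 2) * (k * R + ℓ)) -
        1 / ((1 + a ^ 2 / k ^ 2) * (k * R + 1))))
    (hc₂ : ∀ R : ℝ, c₂ R = Real.sqrt (2 * a / π) *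
      (ℓ / ((1 + a ^ 2 * ℓ ^ 2 / k ^ 2) * (k * R + ℓ)) -
        1 / ((1 + a ^ 2 / k ^ 2) * (k * R + 1))))
    (hD : ∀ R : ℝ, D R = c₁ R * Real.sin (a * R) + c₂ R * Real.cos (a * R)) :
    D 0 = Real.sqrt (2 * a / π) *
        (1 / (1 + a ^ 2 * ℓ ^ 2 / k ^ 2) - 1 / (1 + a ^ 2 / k ^ 2)) ∧
      0 < D 0 ∧
      ∀ R ∈ Set.Ioo (0 : ℝ) (π / (2 * a)), D R ≠ 0 := by
  have hD_eq : ∀ R, D R = det a k ℓ R := fun R => by rw [hD, hc₁, hc₂, det, sinCoeff, cosCoeff]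
  have hD_pos : ∀ R, 0 ≤ R → R < π / (2 * a) → 0 < D R := fun R hR0 hR => by
    rw [hD_eq]
    refine det_pos ha hk hℓ0 hℓ1 hR0 ?_
    rw [lt_div_iff₀ (by positivity)] at hR
    linarith
  have hπ : 0 < π / (2 * a) := by positivity
  exact ⟨by rw [hD_eq, det_zero hℓ0.ne'], hD_pos 0 le_rfl hπ,
    fun R hR => (hD_pos R hR.1.le hR.2).ne'⟩
end
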